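/- For an orthonormal basis {f_α : α = 1,…,n²} of M_n (Hilbert–Schmidt inner product), the operators Q_α := Σ_{i,j=1}^n e_{ij} ⊗ f_α e_{ij} f_α* on ℂⁿ ⊗ ℂⁿ are mutually orthogonal projections: Q_α* = Q_α, Q_α Q_β = δ_{αβ} Q_α. -/

import Mathlib

/-!
`Q_α` is the rank-one operator `|vec f_α⟩⟨vec f_α|`, and `vec` carries the Hilbert–Schmidt inner
product `tr (A* B)` to the standard one on `ℂⁿ ⊗ ℂⁿ`. So the `Q_α` are the rank-one projections
onto an orthonormal family of vectors.
-/

open Matrix BigOperators Kronecker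

noncomputable def Qproj {n : ℕ} (f : Fin (n ^ 2) → Matrix (Fin n) (Fin n) ℂ)
    (α : Fin (n ^ 2)) : Matrix (Fin n × Fin n) (Fin n × Fin n) ℂ :=
  ∑ i : Fin n, ∑ j : Fin n,
    (Matrix.single i j (1 : ℂ)) ⊗ₖ
      (f α * Matrix.single i j (1 : ℂ) * (f α)ᴴ)

theorem Matrix.sum_single_kronecker_mul_single_mul_conjTranspose {m n R : Type*} [Fintype n]
    [DecidableEq n] [CommSemiring R] [StarRing R] (A : Matrix m n R) :
    ∑ i : n, ∑ j : n, single i j (1 : R) ⊗ₖ (A * single i j (1 : R) * Aᴴ) =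
      vecMulVec (vec A) (star (vec A)) := by
  ext ⟨a, b⟩ ⟨c, d⟩
  simp [sum_apply, mul_apply, single, vecMulVec_apply, vec, ite_and]

theorem stmt4_general {n : ℕ} (f : Fin (n ^ 2) → Matrix (Fin n) (Fin n) ℂ)
    (hortho : ∀ α β, ((f α)ᴴ * f β).trace = if α = β then 1 else 0) :
    (∀ α, (Qproj f α)ᴴ = Qproj f α) ∧
    (∀ α β, Qproj f α * Qproj f β = if α = β then Qproj f α else 0) := by
  have hQ (α) : Qproj f α = vecMulVec (vec (f α)) (star (vec (f α))) :=
    sum_single_kronecker_mul_single_mul_conjTranspose (f α)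
  refine ⟨fun α => by rw [hQ, conjTranspose_vecMulVec, star_star], fun α β => ?_⟩
  rw [hQ, hQ, vecMulVec_mul_vecMulVec, vecMulVec_smul, star_vec_dotProduct_vec, hortho]
  split_ifs with h
  · rw [h, one_smul]
  · rw [zero_smul]

/-- For an orthonormal basis `{f_α}` of `M_n`, the operators `Q_α` are mutually
orthogonal projections: `Q_α* = Q_α` and `Q_α Q_β = δ_{αβ} Q_α`. -/
theorem stmt4 {n : ℕ} (f : Fin (n ^ 2) → Matrix (Fin n) (Fin n) ℂ)
    (hortho : ∀ α β, ((f α)ᴴ * f β).trace = if α = β then 1 else 0)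
    (hspan : Submodule.span ℂ (Set.range f) = ⊤) :
    (∀ α, (Qproj f α)ᴴ = Qproj f α) ∧
    (∀ α β, Qproj f α * Qproj f β = if α = β then Qproj f α else 0) :=
  stmt4_general f hortho
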